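/- Let Ξ be a measurable space, let A ⊆ Ξ0 ⊆ Ξ be measurable sets, and let P⋆, P_c be probability measures on Ξ with P⋆(Ξ0) ≥ 1−γ for some γ ∈ [0,1), P_c(Ξ0) > 0, and P_c(A) > 0. Suppose the normalized restrictions satisfy P⋆_{Ξ0} = (1−ε_c)·P_{c,Ξ0} + ε_c·R for some ε_c ∈ [0,1] and some probability measure R supported on Ξ0. Then ε_c ≥ 1 − (P⋆(A)·P_c(Ξ0)) / ((1−γ)·P_c(A)). -/

import Mathlib

open MeasureTheory
open scoped ENNReal

/-- Normalised restriction of a measure to a set: `P_{Ξ₀}(A) = P(A ∩ Ξ₀)/P(Ξ₀)`. -/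
noncomputable def nrestrict {Ξ : Type*} [MeasurableSpace Ξ]
    (P : Measure Ξ) (S : Set Ξ) : Measure Ξ :=
  (P S)⁻¹ • P.restrict S

/-- **Score-based lower bound on the in-bulk centre mismatch.**
If `A ⊆ Ξ₀`, `P⋆(Ξ₀) ≥ 1-γ`, `P_c(Ξ₀) > 0`, `P_c(A) > 0`, and the normalised
restrictions satisfy `P⋆_{Ξ₀} = (1-ε_c)·P_{c,Ξ₀} + ε_c·R` with `R` supported on `Ξ₀`,
then `ε_c ≥ 1 - P⋆(A)·P_c(Ξ₀) / ((1-γ)·P_c(A))`. -/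
theorem score_lower_bound_mismatch
    {Ξ : Type*} [MeasurableSpace Ξ] (Ξ₀ A : Set Ξ)
    (hΞ₀ : MeasurableSet Ξ₀) (hA : MeasurableSet A) (hsub : A ⊆ Ξ₀)
    (Pstar Pc : Measure Ξ) [IsProbabilityMeasure Pstar] [IsProbabilityMeasure Pc]
    (γ : ℝ) (hγ0 : 0 ≤ γ) (hγ1 : γ < 1)
    (hcov : ENNReal.ofReal (1 - γ) ≤ Pstar Ξ₀)
    (hPcΞ₀ : Pc Ξ₀ ≠ 0) (hPcA : Pc A ≠ 0)
    (εc : ℝ) (hεc0 : 0 ≤ εc) (hεc1 : εc ≤ 1)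
    (R : Measure Ξ) [IsProbabilityMeasure R] (hR : R Ξ₀ = 1)
    (hmix : nrestrict Pstar Ξ₀
      = ENNReal.ofReal (1 - εc) • nrestrict Pc Ξ₀ + ENNReal.ofReal εc • R) :
    1 - ((Pstar A).toReal * (Pc Ξ₀).toReal) / ((1 - γ) * (Pc A).toReal) ≤ εc := by
  have hγ : (0:ℝ) < 1 - γ := by linarith
  have key := congrArg (fun μ : Measure Ξ => μ A) hmix
  simp only [nrestrict, Measure.smul_apply, Measure.coe_add, Pi.add_apply, smul_eq_mul,
    Measure.restrict_apply hA, Set.inter_eq_left.mpr hsub] at key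
  have h1 : ENNReal.ofReal (1 - εc) * ((Pc Ξ₀)⁻¹ * Pc A)
      ≤ (Pstar Ξ₀)⁻¹ * Pstar A := by
    rw [key]; exact le_self_add
  have hne : ENNReal.ofReal (1 - γ) ≠ 0 := by
    simp [ENNReal.ofReal_eq_zero]; linarith
  have h2 : (Pstar Ξ₀)⁻¹ * Pstar A ≤ (ENNReal.ofReal (1 - γ))⁻¹ * Pstar A :=
    mul_le_mul_left (ENNReal.inv_le_inv.mpr hcov) _
  have h3 := h1.trans h2
  have hfin : (ENNReal.ofReal (1 - γ))⁻¹ * Pstar A ≠ ⊤ :=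
    ENNReal.mul_ne_top (ENNReal.inv_ne_top.mpr hne) (measure_ne_top _ _)
  have hreal := ENNReal.toReal_mono hfin h3
  rw [ENNReal.toReal_mul, ENNReal.toReal_mul, ENNReal.toReal_mul, ENNReal.toReal_inv,
    ENNReal.toReal_inv, ENNReal.toReal_ofReal hγ.le,
    ENNReal.toReal_ofReal (by linarith : (0:ℝ) ≤ 1 - εc)] at hreal
  set a := (Pstar A).toReal
  set b := (Pc A).toReal
  set c := (Pc Ξ₀).toReal
  have hb : 0 < b := ENNReal.toReal_pos hPcA (measure_ne_top _ _)
  have hc : 0 < c := ENNReal.toReal_pos hPcΞ₀ (measure_ne_top _ _)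
  have h2' : (1 - εc) * ((1 - γ) * b) ≤ a * c := by
    calc (1 - εc) * ((1 - γ) * b)
        = ((1 - εc) * (c⁻¹ * b)) * (c * (1 - γ)) := by field_simp
      _ ≤ ((1 - γ)⁻¹ * a) * (c * (1 - γ)) :=
          mul_le_mul_of_nonneg_right hreal (by positivity)
      _ = a * c := by field_simp
  have h4 : 1 - εc ≤ a * c / ((1 - γ) * b) :=
    (le_div_iff₀ (by positivity)).mpr h2'
  linarith
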